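/- With the Krammer representation maps ρ(σ_i) defined as in Krammer's formulas on the free module with basis v_{ij} (1 ≤ i < j ≤ n), one has ρ(σ_i) ρ(σ_{i+1}) ρ(σ_i) = ρ(σ_{i+1}) ρ(σ_i) ρ(σ_{i+1}) for all 1 ≤ i ≤ n-2. -/

import Mathlib

/-- Index set for the Krammer basis: pairs `(a, b)` with `1 ≤ a < b ≤ n`. -/
def KIdx (n : ℕ) : Type := {p : ℕ × ℕ // 1 ≤ p.1 ∧ p.1 < p.2 ∧ p.2 ≤ n}

/-- The basis vector `v_{a b}` of the free module `KIdx n →₀ R`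
(zero if the indices are out of range). -/
noncomputable def kv (R : Type*) [CommRing R] (n a b : ℕ) : KIdx n →₀ R :=
  if h : 1 ≤ a ∧ a < b ∧ b ≤ n then Finsupp.single ⟨(a, b), h⟩ 1 else 0

/-!
Both sides of the braid relation for `σ_i, σ_{i+1}` fix every `v_{ab}` with `{a, b}` disjoint
from `{i, i+1, i+2}` or with `a < i < i+2 < b`. The remaining basis vectors span invariant
subspaces on which the relation is a finite computation: the core block
`v_{i,i+1}, v_{i,i+2}, v_{i+1,i+2}`, and for each `a < i` (resp. `b > i+2`) the three vectors
`v_{a,i}, v_{a,i+1}, v_{a,i+2}` (resp. `v_{i,b}, v_{i+1,b}, v_{i+2,b}`) together with the core.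
-/

section Blocks

variable {R M : Type*} [CommRing R] [AddCommGroup M] [Module R M]

/-- `S, T` act on `u, v, w` as `ρ(σ_i), ρ(σ_{i+1})` act on `v_{i,i+1}, v_{i,i+2}, v_{i+1,i+2}`. -/
structure IsKrammerCore (q t : R) (S T : M →ₗ[R] M) (u v w : M) : Prop where
  S_u : S u = (t * q ^ 2) • u
  S_v : S v = (t * q * (q - 1)) • u + (1 - q) • v + q • w
  S_w : S w = v
  T_u : T u = (1 - q) • u + q • v + (q * (q - 1)) • w
  T_v : T v = u
  T_w : T w = (t * q ^ 2) • w

namespace IsKrammerCore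

variable {q t : R} {S T : M →ₗ[R] M} {u v w : M}

theorem braid (h : IsKrammerCore q t S T u v w) :
    S (T (S u)) = T (S (T u)) ∧ S (T (S v)) = T (S (T v)) ∧ S (T (S w)) = T (S (T w)) := by
  refine ⟨?_, ?_, ?_⟩
  all_goals simp only [map_add, map_smul, h.S_u, h.S_v, h.S_w, h.T_u, h.T_v, h.T_w]
  all_goals module

theorem braid_left (h : IsKrammerCore q t S T u v w) {x y z : M}
    (hSx : S x = (1 - q) • x + q • y + (q * (q - 1)) • u) (hSy : S y = x) (hSz : S z = z)
    (hTx : T x = x) (hTy : T y = (1 - q) • y + q • z + (q * (q - 1)) • w) (hTz : T z = y) :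
    S (T (S x)) = T (S (T x)) ∧ S (T (S y)) = T (S (T y)) ∧ S (T (S z)) = T (S (T z)) := by
  refine ⟨?_, ?_, ?_⟩
  all_goals simp only [map_add, map_smul, hSx, hSy, hSz, hTx, hTy, hTz,
    h.S_u, h.S_v, h.S_w, h.T_u, h.T_v]
  all_goals module

theorem braid_right (h : IsKrammerCore q t S T u v w) {x y z : M}
    (hSx : S x = (t * q * (q - 1)) • u + (1 - q) • x + q • y) (hSy : S y = x) (hSz : S z = z)
    (hTx : T x = x) (hTy : T y = (t * q * (q - 1)) • w + (1 - q) • y + q • z) (hTz : T z = y) :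
    S (T (S x)) = T (S (T x)) ∧ S (T (S y)) = T (S (T y)) ∧ S (T (S z)) = T (S (T z)) := by
  refine ⟨?_, ?_, ?_⟩
  all_goals simp only [map_add, map_smul, hSx, hSy, hSz, hTx, hTy, hTz,
    h.S_u, h.S_v, h.S_w, h.T_u, h.T_v]
  all_goals module

end IsKrammerCore

end Blocks

theorem kv_eq_single (R : Type*) [CommRing R] {n a b : ℕ} (h : 1 ≤ a ∧ a < b ∧ b ≤ n) :
    kv R n a b = Finsupp.single ⟨(a, b), h⟩ 1 :=
  dif_pos h

theorem linearMap_ext_kv {R M : Type*} [CommRing R] [AddCommGroup M] [Module R M] {n : ℕ}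
    {f g : (KIdx n →₀ R) →ₗ[R] M}
    (h : ∀ a b, 1 ≤ a → a < b → b ≤ n → f (kv R n a b) = g (kv R n a b)) : f = g := by
  refine Finsupp.lhom_ext' fun ⟨⟨a, b⟩, hab⟩ => LinearMap.ext_ring ?_
  have hfg := h a b hab.1 hab.2.1 hab.2.2
  rw [kv_eq_single R hab] at hfg
  exact hfg

/-- Krammer's formulas for the action of `ρ i = ρ(σ_i)` on the basis vectors `v_{ab}`. -/
structure IsKrammerAction {R : Type*} [CommRing R] (n : ℕ) (q t : R)
    (ρ : ℕ → ((KIdx n →₀ R) →ₗ[R] (KIdx n →₀ R))) : Prop where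
  apply_kv_succ : ∀ i, 1 ≤ i → i + 1 ≤ n →
    ρ i (kv R n i (i+1)) = (t * q ^ 2) • kv R n i (i+1)
  apply_kv_of_disjoint : ∀ i a b, 1 ≤ i → i + 1 ≤ n → 1 ≤ a → a < b → b ≤ n →
    i ≠ a → i ≠ b → i + 1 ≠ a → i + 1 ≠ b → ρ i (kv R n a b) = kv R n a b
  apply_kv_succ_left : ∀ i b, 1 ≤ i → i + 1 < b → b ≤ n → ρ i (kv R n (i+1) b) = kv R n i b
  apply_kv_succ_right : ∀ i a, 1 ≤ a → a < i → i + 1 ≤ n → ρ i (kv R n a (i+1)) = kv R n a i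
  apply_kv_left : ∀ i b, 1 ≤ i → i + 1 < b → b ≤ n →
    ρ i (kv R n i b) =
      (t * q * (q - 1)) • kv R n i (i+1) + (1 - q) • kv R n i b + q • kv R n (i+1) b
  apply_kv_right : ∀ i a, 1 ≤ a → a < i → i + 1 ≤ n →
    ρ i (kv R n a i) =
      (1 - q) • kv R n a i + q • kv R n a (i+1) + (q * (q - 1)) • kv R n i (i+1)

namespace IsKrammerAction

variable {R : Type*} [CommRing R] {n : ℕ} {q t : R}
  {ρ : ℕ → ((KIdx n →₀ R) →ₗ[R] (KIdx n →₀ R))} {i : ℕ}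

theorem isKrammerCore (h : IsKrammerAction n q t ρ) (hi : 1 ≤ i) (hin : i + 2 ≤ n) :
    IsKrammerCore q t (ρ i) (ρ (i+1)) (kv R n i (i+1)) (kv R n i (i+2)) (kv R n (i+1) (i+2)) where
  S_u := h.apply_kv_succ i hi (by omega)
  S_v := h.apply_kv_left i (i+2) hi (by omega) hin
  S_w := h.apply_kv_succ_left i (i+2) hi (by omega) hin
  T_u := h.apply_kv_right (i+1) i hi (by omega) hin
  T_v := h.apply_kv_succ_right (i+1) i hi (by omega) hin
  T_w := h.apply_kv_succ (i+1) (by omega) hin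

theorem braid_kv_left (h : IsKrammerAction n q t ρ) (hi : 1 ≤ i) (hin : i + 2 ≤ n)
    {a : ℕ} (ha : 1 ≤ a) (hai : a < i) :
    ρ i (ρ (i+1) (ρ i (kv R n a i))) = ρ (i+1) (ρ i (ρ (i+1) (kv R n a i))) ∧
    ρ i (ρ (i+1) (ρ i (kv R n a (i+1)))) = ρ (i+1) (ρ i (ρ (i+1) (kv R n a (i+1)))) ∧
    ρ i (ρ (i+1) (ρ i (kv R n a (i+2)))) = ρ (i+1) (ρ i (ρ (i+1) (kv R n a (i+2)))) :=
  (h.isKrammerCore hi hin).braid_left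
    (h.apply_kv_right i a ha hai (by omega))
    (h.apply_kv_succ_right i a ha hai (by omega))
    (h.apply_kv_of_disjoint i a (i+2) hi (by omega) ha (by omega) hin
      (by omega) (by omega) (by omega) (by omega))
    (h.apply_kv_of_disjoint (i+1) a i (by omega) hin ha hai (by omega)
      (by omega) (by omega) (by omega) (by omega))
    (h.apply_kv_right (i+1) a ha (by omega) hin)
    (h.apply_kv_succ_right (i+1) a ha (by omega) hin)

theorem braid_kv_right (h : IsKrammerAction n q t ρ) (hi : 1 ≤ i)
    {b : ℕ} (hib : i + 2 < b) (hbn : b ≤ n) :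
    ρ i (ρ (i+1) (ρ i (kv R n i b))) = ρ (i+1) (ρ i (ρ (i+1) (kv R n i b))) ∧
    ρ i (ρ (i+1) (ρ i (kv R n (i+1) b))) = ρ (i+1) (ρ i (ρ (i+1) (kv R n (i+1) b))) ∧
    ρ i (ρ (i+1) (ρ i (kv R n (i+2) b))) = ρ (i+1) (ρ i (ρ (i+1) (kv R n (i+2) b))) :=
  (h.isKrammerCore hi (by omega)).braid_right
    (h.apply_kv_left i b hi (by omega) hbn)
    (h.apply_kv_succ_left i b hi (by omega) hbn)
    (h.apply_kv_of_disjoint i (i+2) b hi (by omega) (by omega) hib hbn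
      (by omega) (by omega) (by omega) (by omega))
    (h.apply_kv_of_disjoint (i+1) i b (by omega) (by omega) hi (by omega) hbn
      (by omega) (by omega) (by omega) (by omega))
    (h.apply_kv_left (i+1) b (by omega) (by omega) hbn)
    (h.apply_kv_succ_left (i+1) b (by omega) (by omega) hbn)

theorem braid_kv (h : IsKrammerAction n q t ρ) (hi : 1 ≤ i) (hin : i + 2 ≤ n)
    {a b : ℕ} (ha : 1 ≤ a) (hab : a < b) (hbn : b ≤ n) :
    ρ i (ρ (i+1) (ρ i (kv R n a b))) = ρ (i+1) (ρ i (ρ (i+1) (kv R n a b))) := by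
  by_cases hfar : b < i ∨ i + 2 < a ∨ (a < i ∧ i + 2 < b)
  · have hS := h.apply_kv_of_disjoint i a b hi (by omega) ha hab hbn
      (by omega) (by omega) (by omega) (by omega)
    have hT := h.apply_kv_of_disjoint (i+1) a b (by omega) (by omega) ha hab hbn
      (by omega) (by omega) (by omega) (by omega)
    simp only [hS, hT]
  obtain ⟨hai, rfl | rfl | rfl⟩ | ⟨rfl, rfl⟩ | ⟨rfl, rfl⟩ | ⟨rfl, rfl⟩ | ⟨rfl | rfl | rfl, hib⟩ :
      (a < i ∧ (b = i ∨ b = i + 1 ∨ b = i + 2)) ∨ (a = i ∧ b = i + 1) ∨ (a = i ∧ b = i + 2) ∨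
        (a = i + 1 ∧ b = i + 2) ∨ ((a = i ∨ a = i + 1 ∨ a = i + 2) ∧ i + 2 < b) := by
    omega
  · exact (h.braid_kv_left hi hin ha hai).1
  · exact (h.braid_kv_left hi hin ha hai).2.1
  · exact (h.braid_kv_left hi hin ha hai).2.2
  · exact (h.isKrammerCore hi hin).braid.1
  · exact (h.isKrammerCore hi hin).braid.2.1
  · exact (h.isKrammerCore hi hin).braid.2.2
  · exact (h.braid_kv_right hi hib hbn).1
  · exact (h.braid_kv_right hi hib hbn).2.1
  · exact (h.braid_kv_right hi hib hbn).2.2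

end IsKrammerAction

theorem stmt_4_general {R : Type*} [CommRing R] (n : ℕ) (q t : R)
    (ρ : ℕ → ((KIdx n →₀ R) →ₗ[R] (KIdx n →₀ R)))
    (hA : ∀ i, 1 ≤ i → i + 1 ≤ n →
      ρ i (kv R n i (i+1)) = (t * q ^ 2) • kv R n i (i+1))
    (hB : ∀ i a b, 1 ≤ i → i + 1 ≤ n → 1 ≤ a → a < b → b ≤ n →
      i ≠ a → i ≠ b → i + 1 ≠ a → i + 1 ≠ b → ρ i (kv R n a b) = kv R n a b)
    (hC1 : ∀ i b, 1 ≤ i → i + 1 < b → b ≤ n → ρ i (kv R n (i+1) b) = kv R n i b)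
    (hC2 : ∀ i a, 1 ≤ a → a < i → i + 1 ≤ n → ρ i (kv R n a (i+1)) = kv R n a i)
    (hD1 : ∀ i b, 1 ≤ i → i + 1 < b → b ≤ n →
      ρ i (kv R n i b) =
        (t * q * (q - 1)) • kv R n i (i+1) + (1 - q) • kv R n i b
          + q • kv R n (i+1) b)
    (hD2 : ∀ i a, 1 ≤ a → a < i → i + 1 ≤ n →
      ρ i (kv R n a i) =
        (1 - q) • kv R n a i + q • kv R n a (i+1)
          + (q * (q - 1)) • kv R n i (i+1)) :
    ∀ i, 1 ≤ i → i + 2 ≤ n →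
      ρ i ∘ₗ ρ (i+1) ∘ₗ ρ i = ρ (i+1) ∘ₗ ρ i ∘ₗ ρ (i+1) := by
  intro i hi hin
  have h : IsKrammerAction n q t ρ := ⟨hA, hB, hC1, hC2, hD1, hD2⟩
  exact linearMap_ext_kv fun a b ha hab hbn => h.braid_kv hi hin ha hab hbn

/-- Adjacent braid relation for the Krammer representation: if `ρ i`
(for `1 ≤ i ≤ n-1`) acts on the basis `v_{ab}` by Krammer's formulas, then
`ρ i ρ (i+1) ρ i = ρ (i+1) ρ i ρ (i+1)` for all `1 ≤ i ≤ n-2`. -/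
theorem stmt_4 {R : Type*} [CommRing R] (n : ℕ) (q t : R)
    (hq : IsUnit q) (ht : IsUnit t)
    (ρ : ℕ → ((KIdx n →₀ R) →ₗ[R] (KIdx n →₀ R)))
    (hA : ∀ i, 1 ≤ i → i + 1 ≤ n →
      ρ i (kv R n i (i+1)) = (t * q ^ 2) • kv R n i (i+1))
    (hB : ∀ i a b, 1 ≤ i → i + 1 ≤ n → 1 ≤ a → a < b → b ≤ n →
      i ≠ a → i ≠ b → i + 1 ≠ a → i + 1 ≠ b → ρ i (kv R n a b) = kv R n a b)
    (hC1 : ∀ i b, 1 ≤ i → i + 1 < b → b ≤ n → ρ i (kv R n (i+1) b) = kv R n i b)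
    (hC2 : ∀ i a, 1 ≤ a → a < i → i + 1 ≤ n → ρ i (kv R n a (i+1)) = kv R n a i)
    (hD1 : ∀ i b, 1 ≤ i → i + 1 < b → b ≤ n →
      ρ i (kv R n i b) =
        (t * q * (q - 1)) • kv R n i (i+1) + (1 - q) • kv R n i b
          + q • kv R n (i+1) b)
    (hD2 : ∀ i a, 1 ≤ a → a < i → i + 1 ≤ n →
      ρ i (kv R n a i) =
        (1 - q) • kv R n a i + q • kv R n a (i+1)
          + (q * (q - 1)) • kv R n i (i+1)) :
    ∀ i, 1 ≤ i → i + 2 ≤ n →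
      ρ i ∘ₗ ρ (i+1) ∘ₗ ρ i = ρ (i+1) ∘ₗ ρ i ∘ₗ ρ (i+1) :=
  stmt_4_general n q t ρ hA hB hC1 hC2 hD1 hD2
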